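/- arXiv:2311.16743 — 8 statements merged into one kernel-verified Lean document; each statement's English description precedes it below -/
import Mathlib

section
/- For the subgradient method x^{k+1} = x^k - h_k ∇f(x^k) with Polyak stepsize h_k = (f(x^k) - f*)/‖∇f(x^k)‖², each iterate satisfies ‖x^{k+1} - x*‖² ≤ ‖x^k - x*‖² - (f(x^k) - f*)²/‖∇f(x^k)‖² for any minimizer x*. -/
/-!
The subgradient inequality at `x*` gives `f x - f* ≤ ⟪g, x - x*⟫`, so
`‖x - t g - x*‖² ≤ ‖x - x*‖² - 2 t (f x - f*) + t² ‖g‖²` for `t ≥ 0`; the Polyak step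
`t = (f x - f*) / ‖g‖²` is the minimiser of this quadratic bound, where it equals
`‖x - x*‖² - (f x - f*)² / ‖g‖²`.
-/

open RealInnerProductSpace

section Polyak

variable {E : Type*} [NormedAddCommGroup E] [InnerProductSpace ℝ E]

theorem sub_le_inner_sub_of_subgradient {f : E → ℝ} {x g : E}
    (hsub : ∀ y, f x + ⟪g, y - x⟫ ≤ f y) (y : E) : f x - f y ≤ ⟪g, x - y⟫ := by
  have := hsub y
  rw [← neg_sub x y, inner_neg_right] at this
  linarith

theorem norm_sub_smul_sq (v g : E) (t : ℝ) :
    ‖v - t • g‖ ^ 2 = ‖v‖ ^ 2 - 2 * t * ⟪g, v⟫ + t ^ 2 * ‖g‖ ^ 2 := by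
  rw [norm_sub_sq_real, real_inner_smul_right, norm_smul, real_inner_comm, mul_pow,
    Real.norm_eq_abs, sq_abs]
  ring

theorem norm_sub_div_norm_sq_smul_sq_le {v g : E} {a : ℝ} (ha : 0 ≤ a) (hav : a ≤ ⟪g, v⟫) :
    ‖v - (a / ‖g‖ ^ 2) • g‖ ^ 2 ≤ ‖v‖ ^ 2 - a ^ 2 / ‖g‖ ^ 2 := by
  rcases eq_or_ne g 0 with rfl | hg
  · -- the step is `a / 0 = 0` and both sides are `‖v‖ ^ 2`
    simp
  set h := a / ‖g‖ ^ 2 with hh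
  have hstep : h ^ 2 * ‖g‖ ^ 2 = h * a := by
    rw [hh]; field_simp
  have hdecr : a ^ 2 / ‖g‖ ^ 2 = h * a := by
    rw [hh]; ring
  have hinner : h * a ≤ h * ⟪g, v⟫ := mul_le_mul_of_nonneg_left hav (by positivity)
  rw [norm_sub_smul_sq]
  linarith

end Polyak

theorem polyak_step_decrease_general {n : ℕ} (f : EuclideanSpace ℝ (Fin n) → ℝ)
    (x xstar g : EuclideanSpace ℝ (Fin n)) (fstar : ℝ)
    (hsub : ∀ y, f y ≥ f x + (inner ℝ g (y - x) : ℝ))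
    (hmin : f xstar = fstar) (hlb : ∀ y, fstar ≤ f y) :
    ‖x - ((f x - fstar) / ‖g‖ ^ 2) • g - xstar‖ ^ 2
      ≤ ‖x - xstar‖ ^ 2 - (f x - fstar) ^ 2 / ‖g‖ ^ 2 := by
  have hgap : 0 ≤ f x - fstar := sub_nonneg.mpr (hlb x)
  have hinner : f x - fstar ≤ ⟪g, x - xstar⟫ :=
    hmin ▸ sub_le_inner_sub_of_subgradient hsub xstar
  rw [sub_right_comm]
  exact norm_sub_div_norm_sq_smul_sq_le hgap hinner

/-- One step of the subgradient method with Polyak stepsize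
`h = (f x - f*)/‖g‖²` decreases the squared distance to any minimizer `x*`
by at least `(f x - f*)²/‖g‖²`. Here `g` is any nonzero subgradient of the
convex function `f` at `x`. -/
theorem polyak_step_decrease {n : ℕ} (f : EuclideanSpace ℝ (Fin n) → ℝ)
    (x xstar g : EuclideanSpace ℝ (Fin n)) (fstar : ℝ)
    (hsub : ∀ y, f y ≥ f x + (inner ℝ g (y - x) : ℝ))
    (hg : g ≠ 0)
    (hmin : f xstar = fstar) (hlb : ∀ y, fstar ≤ f y) :
    ‖x - ((f x - fstar) / ‖g‖ ^ 2) • g - xstar‖ ^ 2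
      ≤ ‖x - xstar‖ ^ 2 - (f x - fstar) ^ 2 / ‖g‖ ^ 2 :=
  polyak_step_decrease_general f x xstar g fstar hsub hmin hlb
end

section
/- If additionally f is M-Lipschitz (so all subgradient norms are bounded by M) and has an α-sharp minimum, the subgradient method with Polyak stepsize converges linearly: dist(x^{k+1}, X*)² ≤ (1 - α²/M²)^{k+1} · dist(x^0, X*)². -/
/-! For a minimizer `y`, the subgradient inequality gives `f x - f* ≤ ⟪g, x - y⟫`, so
`‖x - t g - y‖² ≤ ‖x - y‖² - 2t (f x - f*) + t² ‖g‖²`; the Polyak step `t = (f x - f*)/‖g‖²`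
minimizes the right-hand side and lowers it by `(f x - f*)²/‖g‖²`. Taking `y` the nearest point
of `X*`, sharpness and `‖g‖ ≤ M` (Lipschitz continuity) bound this decrease below by
`(α²/M²) dist(x, X*)²`, a one-step contraction of the squared distance that is then iterated. -/

open Metric

theorem le_pow_mul_of_le_mul {u : ℕ → ℝ} {c : ℝ} (hu : ∀ k, 0 ≤ u k)
    (hc : ∀ k, u (k + 1) ≤ c * u k) (k : ℕ) : u k ≤ c ^ k * u 0 := by
  rcases le_or_gt 0 c with hc0 | hc0
  · induction k with
    | zero => simp
    | succ k ih =>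
      calc u (k + 1) ≤ c * u k := hc k
        _ ≤ c * (c ^ k * u 0) := mul_le_mul_of_nonneg_left ih hc0
        _ = c ^ (k + 1) * u 0 := by ring
  · -- a negative factor forces the nonnegative sequence to vanish
    have hzero : ∀ k, u k = 0 := fun k =>
      le_antisymm (nonpos_of_mul_nonneg_right ((hu (k + 1)).trans (hc k)) hc0) (hu k)
    simp [hzero]

section InnerProductSpace

variable {E : Type*} [NormedAddCommGroup E] [InnerProductSpace ℝ E]

theorem norm_le_of_subgradient_of_lipschitz {f : E → ℝ} {M : ℝ} {x g : E} (hg : g ≠ 0)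
    (hLip : ∀ a b, |f a - f b| ≤ M * ‖a - b‖) (hsub : ∀ y, f x + inner ℝ g (y - x) ≤ f y) :
    ‖g‖ ≤ M := by
  have hgpos : 0 < ‖g‖ := norm_pos_iff.mpr hg
  have hsq : ‖g‖ * ‖g‖ ≤ M * ‖g‖ := calc
    ‖g‖ * ‖g‖ ≤ f (x + g) - f x := by
      have := hsub (x + g)
      rw [add_sub_cancel_left, real_inner_self_eq_norm_mul_norm] at this
      linarith
    _ ≤ |f (x + g) - f x| := le_abs_self _
    _ ≤ M * ‖g‖ := by simpa using hLip (x + g) x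
  exact le_of_mul_le_mul_right hsq hgpos

theorem sub_le_inner_of_subgradient {f : E → ℝ} {x g y : E}
    (hsub : f x + inner ℝ g (y - x) ≤ f y) : f x - f y ≤ inner ℝ g (x - y) := by
  rw [← neg_sub x y, inner_neg_right] at hsub
  linarith

theorem norm_polyakStep_sub_sq_le {x g y : E} {F : ℝ} (hF : 0 ≤ F)
    (hFg : F ≤ inner ℝ g (x - y)) :
    ‖x - (F / ‖g‖ ^ 2) • g - y‖ ^ 2 ≤ ‖x - y‖ ^ 2 - F ^ 2 / ‖g‖ ^ 2 := by
  rcases eq_or_ne g 0 with rfl | hg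
  · simp
  have hG : 0 < ‖g‖ ^ 2 := by positivity
  have hexp : ‖x - (F / ‖g‖ ^ 2) • g - y‖ ^ 2
      = ‖x - y‖ ^ 2 - 2 * (F / ‖g‖ ^ 2) * inner ℝ g (x - y) + F ^ 2 / ‖g‖ ^ 2 := by
    rw [sub_right_comm, norm_sub_sq_real, real_inner_smul_right, norm_smul, mul_pow,
      Real.norm_eq_abs, sq_abs, real_inner_comm]
    field_simp
  have hcross : F ^ 2 / ‖g‖ ^ 2 ≤ F / ‖g‖ ^ 2 * inner ℝ g (x - y) := calc
    F ^ 2 / ‖g‖ ^ 2 = F / ‖g‖ ^ 2 * F := by ring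
    _ ≤ F / ‖g‖ ^ 2 * inner ℝ g (x - y) := mul_le_mul_of_nonneg_left hFg (by positivity)
  linarith

theorem infDist_polyakStep_sq_le [ProperSpace E] {f : E → ℝ} {X : Set E} {fstar α M : ℝ}
    {x g : E} (hα : 0 ≤ α) (hX : IsClosed X) (hne : X.Nonempty) (hfX : ∀ y ∈ X, f y = fstar)
    (hsub : ∀ y, f x + inner ℝ g (y - x) ≤ f y) (hg : g ≠ 0) (hgM : ‖g‖ ≤ M)
    (hsharp : α * infDist x X ≤ f x - fstar) :
    infDist (x - ((f x - fstar) / ‖g‖ ^ 2) • g) X ^ 2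
      ≤ (1 - α ^ 2 / M ^ 2) * infDist x X ^ 2 := by
  obtain ⟨y, hy, hdist⟩ := hX.exists_infDist_eq_dist hne x
  have hαd : 0 ≤ α * infDist x X := mul_nonneg hα infDist_nonneg
  have hdecrease := norm_polyakStep_sub_sq_le (hαd.trans hsharp)
    (hfX y hy ▸ sub_le_inner_of_subgradient (hsub y))
  have hgpos : 0 < ‖g‖ := norm_pos_iff.mpr hg
  have hsharp_sq : α ^ 2 / M ^ 2 * infDist x X ^ 2 ≤ (f x - fstar) ^ 2 / ‖g‖ ^ 2 := calc
    α ^ 2 / M ^ 2 * infDist x X ^ 2 = (α * infDist x X) ^ 2 / M ^ 2 := by ring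
    _ ≤ (f x - fstar) ^ 2 / ‖g‖ ^ 2 := by gcongr
  calc infDist (x - ((f x - fstar) / ‖g‖ ^ 2) • g) X ^ 2
      ≤ ‖x - ((f x - fstar) / ‖g‖ ^ 2) • g - y‖ ^ 2 := by
        rw [← dist_eq_norm]
        exact pow_le_pow_left₀ infDist_nonneg (infDist_le_dist_of_mem hy) 2
    _ ≤ ‖x - y‖ ^ 2 - (f x - fstar) ^ 2 / ‖g‖ ^ 2 := hdecrease
    _ ≤ (1 - α ^ 2 / M ^ 2) * infDist x X ^ 2 := by
        rw [← dist_eq_norm, ← hdist]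
        linarith

end InnerProductSpace

theorem continuous_of_abs_sub_le_mul_norm {E : Type*} [SeminormedAddCommGroup E] {f : E → ℝ}
    {M : ℝ} (hLip : ∀ a b, |f a - f b| ≤ M * ‖a - b‖) : Continuous f :=
  (LipschitzWith.of_dist_le' fun a b => by
    simpa only [Real.dist_eq, dist_eq_norm, Real.norm_eq_abs] using hLip a b).continuous

theorem Continuous.isClosed_setOf_forall_le {α β : Type*} [TopologicalSpace α]
    [TopologicalSpace β] [Preorder β] [OrderClosedTopology β] {f : α → β}
    (hf : Continuous f) : IsClosed {y | ∀ z, f y ≤ f z} := by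
  rw [Set.ofPred_forall]
  exact isClosed_iInter fun z => isClosed_le hf continuous_const

theorem polyak_sharp_min_linear_rate_general {n : ℕ} (f : EuclideanSpace ℝ (Fin n) → ℝ)
    (Xstar : Set (EuclideanSpace ℝ (Fin n))) (fstar α M : ℝ) (hα : 0 < α)
    (hXstar : Xstar = {y | ∀ z, f y ≤ f z}) (hne : Xstar.Nonempty)
    (hfstar : ∀ y ∈ Xstar, f y = fstar)
    (hLip : ∀ a b, |f a - f b| ≤ M * ‖a - b‖)
    (x g : ℕ → EuclideanSpace ℝ (Fin n))
    (hsub : ∀ k y, f y ≥ f (x k) + (inner ℝ (g k) (y - x k) : ℝ))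
    (hgne : ∀ k, g k ≠ 0)
    (hsharp : ∀ y, f y - fstar ≥ α * Metric.infDist y Xstar)
    (hstep : ∀ k, x (k + 1) = x k - ((f (x k) - fstar) / ‖g k‖ ^ 2) • g k) :
    ∀ k, Metric.infDist (x (k + 1)) Xstar ^ 2
      ≤ (1 - α ^ 2 / M ^ 2) ^ (k + 1) * Metric.infDist (x 0) Xstar ^ 2 := by
  have hclosed : IsClosed Xstar :=
    hXstar ▸ (continuous_of_abs_sub_le_mul_norm hLip).isClosed_setOf_forall_le
  have hcontract (k : ℕ) :
      infDist (x (k + 1)) Xstar ^ 2 ≤ (1 - α ^ 2 / M ^ 2) * infDist (x k) Xstar ^ 2 := by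
    rw [hstep k]
    exact infDist_polyakStep_sq_le hα.le hclosed hne hfstar (hsub k) (hgne k)
      (norm_le_of_subgradient_of_lipschitz (hgne k) hLip (hsub k)) (hsharp (x k))
  exact fun k => le_pow_mul_of_le_mul (u := fun k => infDist (x k) Xstar ^ 2)
    (fun _ => sq_nonneg _) hcontract (k + 1)

/-- Linear (geometric) convergence of the subgradient method with Polyak
stepsize for a convex `M`-Lipschitz function with an `α`-sharp minimum:
`dist(x^{k+1}, X*)² ≤ (1 - α²/M²)^{k+1} dist(x⁰, X*)²`. -/
theorem polyak_sharp_min_linear_rate {n : ℕ} (f : EuclideanSpace ℝ (Fin n) → ℝ)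
    (Xstar : Set (EuclideanSpace ℝ (Fin n))) (fstar α M : ℝ) (hα : 0 < α) (hM : 0 < M)
    (hXstar : Xstar = {y | ∀ z, f y ≤ f z}) (hne : Xstar.Nonempty)
    (hfstar : ∀ y ∈ Xstar, f y = fstar)
    (hLip : ∀ a b, |f a - f b| ≤ M * ‖a - b‖)
    (x g : ℕ → EuclideanSpace ℝ (Fin n))
    (hsub : ∀ k y, f y ≥ f (x k) + (inner ℝ (g k) (y - x k) : ℝ))
    (hgne : ∀ k, g k ≠ 0)
    (hsharp : ∀ y, f y - fstar ≥ α * Metric.infDist y Xstar)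
    (hstep : ∀ k, x (k + 1) = x k - ((f (x k) - fstar) / ‖g k‖ ^ 2) • g k) :
    ∀ k, Metric.infDist (x (k + 1)) Xstar ^ 2
      ≤ (1 - α ^ 2 / M ^ 2) ^ (k + 1) * Metric.infDist (x 0) Xstar ^ 2 :=
  polyak_sharp_min_linear_rate_general f Xstar fstar α M hα hXstar hne hfstar hLip x g hsub hgne
    hsharp hstep
end

section
/- If f(x) = (1/2)‖Φ(x) - y‖² where Φ is differentiable with Jacobian satisfying λ_min(DΦ(x)·DΦ(x)ᵀ) ≥ μ > 0 uniformly, then f satisfies the PL condition: ‖∇f(x)‖² ≥ 2μ(f(x) - inf f). -/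
/-- If `f(x) = ½‖Φ(x) - y‖²` with `Φ` differentiable and the Jacobian satisfying
`λ_min(DΦ(x) DΦ(x)ᵀ) ≥ μ > 0` uniformly (equivalently, `‖DΦ(x)ᵀ w‖² ≥ μ‖w‖²`
for all `w`), then `f` satisfies the PL condition
`‖∇f(x)‖² ≥ 2μ (f(x) - inf f)`, where `∇f(x) = DΦ(x)ᵀ (Φ(x) - y)`. -/
theorem nonlinear_least_squares_PL {d m : ℕ}
    (Φ : EuclideanSpace ℝ (Fin d) → EuclideanSpace ℝ (Fin m))
    (y : EuclideanSpace ℝ (Fin m)) (μ : ℝ) (hμ : 0 < μ)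
    (J : EuclideanSpace ℝ (Fin d) →
      (EuclideanSpace ℝ (Fin d) →L[ℝ] EuclideanSpace ℝ (Fin m)))
    (hJ : ∀ x, HasFDerivAt Φ (J x) x)
    (hEig : ∀ x w, μ * ‖w‖ ^ 2 ≤ ‖ContinuousLinearMap.adjoint (J x) w‖ ^ 2)
    (f : EuclideanSpace ℝ (Fin d) → ℝ)
    (hf : ∀ x, f x = (1 / 2) * ‖Φ x - y‖ ^ 2) :
    ∀ x, 2 * μ * (f x - sInf (Set.range f))
      ≤ ‖ContinuousLinearMap.adjoint (J x) (Φ x - y)‖ ^ 2 := by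
  intro x
  have hinf : 0 ≤ sInf (Set.range f) := by
    apply Real.sInf_nonneg
    rintro _ ⟨z, rfl⟩
    rw [hf z]; positivity
  have h1 : 2 * μ * (f x - sInf (Set.range f)) ≤ 2 * μ * f x := by
    nlinarith
  have h2 : 2 * μ * f x = μ * ‖Φ x - y‖ ^ 2 := by rw [hf x]; ring
  calc 2 * μ * (f x - sInf (Set.range f)) ≤ μ * ‖Φ x - y‖ ^ 2 := by
        rw [← h2]; exact h1
    _ ≤ _ := hEig x _
end

section
/- Gradient descent with step 1/L on an L-smooth function satisfying the μ-PL condition converges linearly: f(x^k) - f* ≤ (1 - μ/L)^k (f(x^0) - f*). -/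
/-!
Along the segment from `x` to `x + d`, the Lipschitz bound on the gradient shows that
`t ↦ f (x + t • d) - t ⟪∇f x, d⟫ - L t² ‖d‖² / 2` is antitone, which gives the descent lemma
`f (x + d) ≤ f x + ⟪∇f x, d⟫ + L ‖d‖² / 2`. For the step `d = -(1/L) ∇f x` this is a decrease of
`‖∇f x‖² / (2L)`, which the PL inequality bounds below by `(μ / L) (f x - f*)`; so every step
contracts the gap `f x - f*` by the factor `1 - μ / L`.
-/

open scoped RealInnerProductSpace

section

variable {E : Type*} [NormedAddCommGroup E] [InnerProductSpace ℝ E] [CompleteSpace E]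
  {f : E → ℝ} {g : E → E} {L : ℝ}

theorem apply_add_le_of_lipschitz_gradient (hgrad : ∀ x, HasGradientAt f (g x) x)
    (hLip : ∀ x y, ‖g x - g y‖ ≤ L * ‖x - y‖) (x d : E) :
    f (x + d) ≤ f x + ⟪g x, d⟫ + L / 2 * ‖d‖ ^ 2 := by
  set φ : ℝ → ℝ := fun t ↦ f (x + t • d) - t * ⟪g x, d⟫ - L / 2 * t ^ 2 * ‖d‖ ^ 2
  have hφ' : ∀ t : ℝ, HasDerivAt φ (⟪g (x + t • d) - g x, d⟫ - L * t * ‖d‖ ^ 2) t := by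
    intro t
    have hline : HasDerivAt (fun t : ℝ ↦ x + t • d) d t := by
      simpa using ((hasDerivAt_id t).smul_const d).const_add x
    have hf : HasDerivAt (fun t : ℝ ↦ f (x + t • d)) ⟪g (x + t • d), d⟫ t := by
      exact (hgrad (x + t • d)).hasFDerivAt.comp_hasDerivAt t hline
    have hlin := (hasDerivAt_id t).mul_const ⟪g x, d⟫
    have hquad := ((hasDerivAt_pow 2 t).const_mul (L / 2)).mul_const (‖d‖ ^ 2)
    refine ((hf.sub hlin).sub hquad).congr_deriv ?_
    rw [inner_sub_left]
    ring
  have hanti : AntitoneOn φ (Set.Icc 0 1) := by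
    refine antitoneOn_of_hasDerivWithinAt_nonpos (convex_Icc 0 1)
      (fun t _ ↦ (hφ' t).continuousAt.continuousWithinAt)
      (fun t _ ↦ (hφ' t).hasDerivWithinAt) fun t ht ↦ ?_
    rw [interior_Icc] at ht
    have hg : ‖g (x + t • d) - g x‖ ≤ L * (t * ‖d‖) := by
      simpa [norm_smul, abs_of_pos ht.1] using hLip (x + t • d) x
    have hinner := real_inner_le_norm (g (x + t • d) - g x) d
    nlinarith [norm_nonneg d]
  have h := hanti (by norm_num) (by norm_num) zero_le_one
  simp only [φ, one_smul, zero_smul, add_zero] at h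
  linarith

theorem apply_gradient_step_le (hL : 0 < L) (hgrad : ∀ x, HasGradientAt f (g x) x)
    (hLip : ∀ x y, ‖g x - g y‖ ≤ L * ‖x - y‖) (x : E) :
    f (x - (1 / L) • g x) ≤ f x - ‖g x‖ ^ 2 / (2 * L) := by
  have h := apply_add_le_of_lipschitz_gradient hgrad hLip x (-(1 / L) • g x)
  rw [neg_smul, ← sub_eq_add_neg, inner_neg_right, real_inner_smul_right,
    real_inner_self_eq_norm_sq, norm_neg, norm_smul, Real.norm_of_nonneg (by positivity)] at h
  convert h using 1
  field_simp
  ring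

theorem apply_gradient_step_sub_le_of_PL {μ fstar : ℝ} (hL : 0 < L) (hμ : 0 < μ)
    (hgrad : ∀ x, HasGradientAt f (g x) x) (hLip : ∀ x y, ‖g x - g y‖ ≤ L * ‖x - y‖) {x : E}
    (hPL : f x - fstar ≤ 1 / (2 * μ) * ‖g x‖ ^ 2) :
    f (x - (1 / L) • g x) - fstar ≤ (1 - μ / L) * (f x - fstar) := by
  have hgap : 2 * μ * (f x - fstar) ≤ ‖g x‖ ^ 2 := by
    rwa [one_div_mul_eq_div, le_div_iff₀ (by positivity), mul_comm] at hPL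
  calc f (x - (1 / L) • g x) - fstar ≤ f x - fstar - ‖g x‖ ^ 2 / (2 * L) := by
        linarith [apply_gradient_step_le hL hgrad hLip x]
    _ ≤ f x - fstar - 2 * μ * (f x - fstar) / (2 * L) := by gcongr
    _ = (1 - μ / L) * (f x - fstar) := by field_simp

end

theorem gradient_descent_PL_linear_rate_general {n : ℕ} (f : EuclideanSpace ℝ (Fin n) → ℝ)
    (g : EuclideanSpace ℝ (Fin n) → EuclideanSpace ℝ (Fin n)) (L μ fstar : ℝ)
    (hL : 0 < L) (hμ : 0 < μ) (hμL : μ ≤ L)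
    (hgrad : ∀ x, HasGradientAt f (g x) x)
    (hLip : ∀ x y, ‖g x - g y‖ ≤ L * ‖x - y‖)
    (hPL : ∀ x, f x - fstar ≤ 1 / (2 * μ) * ‖g x‖ ^ 2)
    (x : ℕ → EuclideanSpace ℝ (Fin n))
    (hstep : ∀ k, x (k + 1) = x k - (1 / L) • g (x k)) :
    ∀ k, f (x k) - fstar ≤ (1 - μ / L) ^ k * (f (x 0) - fstar) := by
  have hrate : 0 ≤ 1 - μ / L := sub_nonneg.2 ((div_le_one hL).2 hμL)
  refine fun k ↦ le_geom (u := fun k ↦ f (x k) - fstar) hrate k fun j _ ↦ ?_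
  simpa only [hstep] using apply_gradient_step_sub_le_of_PL hL hμ hgrad hLip (hPL (x j))

/-- Gradient descent with step `1/L` on an `L`-smooth function satisfying the
`μ`-PL condition converges linearly:
`f(x^k) - f* ≤ (1 - μ/L)^k (f(x⁰) - f*)`. -/
theorem gradient_descent_PL_linear_rate {n : ℕ} (f : EuclideanSpace ℝ (Fin n) → ℝ)
    (g : EuclideanSpace ℝ (Fin n) → EuclideanSpace ℝ (Fin n)) (L μ fstar : ℝ)
    (hL : 0 < L) (hμ : 0 < μ) (hμL : μ ≤ L)
    (hgrad : ∀ x, HasGradientAt f (g x) x)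
    (hLip : ∀ x y, ‖g x - g y‖ ≤ L * ‖x - y‖)
    (xstar : EuclideanSpace ℝ (Fin n))
    (hmin : ∀ y, f xstar ≤ f y) (hfstar : f xstar = fstar)
    (hPL : ∀ x, f x - fstar ≤ 1 / (2 * μ) * ‖g x‖ ^ 2)
    (x : ℕ → EuclideanSpace ℝ (Fin n))
    (hstep : ∀ k, x (k + 1) = x k - (1 / L) • g (x k)) :
    ∀ k, f (x k) - fstar ≤ (1 - μ / L) ^ k * (f (x 0) - fstar) :=
  gradient_descent_PL_linear_rate_general f g L μ fstar hL hμ hμL hgrad hLip hPL x hstep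
end

section
/- Gradient descent with inexact gradient (absolute error Δ) on an L-smooth function with μ-PL condition satisfies f(x^{k+1}) - f* ≤ (1 - μ/L)^{k+1}(f(x^0) - f*) + Δ²/(2μ). -/
/-!
By the descent lemma for an `L`-Lipschitz gradient, the step `x - L⁻¹ • d` decreases `f` by
`(‖∇f x‖² - ‖d - ∇f x‖²) / (2L)`. The PL inequality turns `‖∇f x‖² / (2L)` into
`μ / L * (f x - f*)`, so the gap `aₖ = f xₖ - f*` obeys `aₖ₊₁ ≤ (1 - μ/L) aₖ + Δ² / (2L)`.
Unrolling this affine recursion gives the geometric term plus the fixed point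
`Δ² / (2L) / (μ / L) = Δ² / (2μ)`.
-/

open RealInnerProductSpace Set

section Descent

variable {E : Type*} [NormedAddCommGroup E] [InnerProductSpace ℝ E] [CompleteSpace E]
  {f : E → ℝ} {g : E → E} {L : ℝ}

theorem HasGradientAt.hasDerivAt_comp_add_smul {x v p : E} {t : ℝ}
    (hf : HasGradientAt f p (x + t • v)) :
    HasDerivAt (fun s : ℝ => f (x + s • v)) ⟪p, v⟫ t := by
  have hline : HasDerivAt (fun s : ℝ => x + s • v) v t := by
    simpa using ((hasDerivAt_id t).smul_const v).const_add x
  exact hf.hasFDerivAt.comp_hasDerivAt t hline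

theorem le_add_inner_add_of_lipschitz_gradient (hgrad : ∀ x, HasGradientAt f (g x) x)
    (hLip : ∀ x y, ‖g x - g y‖ ≤ L * ‖x - y‖) (x y : E) :
    f y ≤ f x + ⟪g x, y - x⟫ + L / 2 * ‖y - x‖ ^ 2 := by
  set v := y - x
  have hφ : ∀ t : ℝ, HasDerivAt (fun s : ℝ => f (x + s • v)) ⟪g (x + t • v), v⟫ t :=
    fun t => (hgrad _).hasDerivAt_comp_add_smul
  have hB : ∀ t : ℝ, HasDerivAt (fun s : ℝ => f x + s * ⟪g x, v⟫ + L / 2 * ‖v‖ ^ 2 * s ^ 2)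
      (⟪g x, v⟫ + L * ‖v‖ ^ 2 * t) t := by
    intro t
    refine ((((hasDerivAt_id' t).mul_const ⟪g x, v⟫).const_add (f x)).add
      ((hasDerivAt_pow 2 t).const_mul (L / 2 * ‖v‖ ^ 2))).congr_deriv ?_
    push_cast
    ring
  have hbound : ∀ t ∈ Ico (0 : ℝ) 1, ⟪g (x + t • v), v⟫ ≤ ⟪g x, v⟫ + L * ‖v‖ ^ 2 * t := by
    rintro t ⟨ht, -⟩
    calc ⟪g (x + t • v), v⟫ = ⟪g x, v⟫ + ⟪g (x + t • v) - g x, v⟫ := by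
          rw [inner_sub_left]; ring
      _ ≤ ⟪g x, v⟫ + ‖g (x + t • v) - g x‖ * ‖v‖ := by gcongr; exact real_inner_le_norm _ _
      _ ≤ ⟪g x, v⟫ + L * ‖t • v‖ * ‖v‖ := by
          gcongr; simpa using hLip (x + t • v) x
      _ = ⟪g x, v⟫ + L * ‖v‖ ^ 2 * t := by
          rw [norm_smul, Real.norm_of_nonneg ht]; ring
  have key := image_le_of_deriv_right_le_deriv_boundary
    (fun t _ => (hφ t).continuousAt.continuousWithinAt)
    (fun t _ => (hφ t).hasDerivWithinAt) (by simp)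
    (fun t _ => (hB t).continuousAt.continuousWithinAt)
    (fun t _ => (hB t).hasDerivWithinAt) hbound (right_mem_Icc.2 zero_le_one)
  simpa [v] using key

theorem apply_sub_inv_smul_le_of_lipschitz_gradient (hgrad : ∀ x, HasGradientAt f (g x) x)
    (hLip : ∀ x y, ‖g x - g y‖ ≤ L * ‖x - y‖) (hL : 0 < L) (x d : E) :
    f (x - L⁻¹ • d) ≤ f x - (‖g x‖ ^ 2 - ‖d - g x‖ ^ 2) / (2 * L) := by
  have h := le_add_inner_add_of_lipschitz_gradient hgrad hLip x (x - L⁻¹ • d)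
  have hsq : ‖d - g x‖ ^ 2 = ‖d‖ ^ 2 - 2 * ⟪d, g x⟫ + ‖g x‖ ^ 2 := norm_sub_sq_real d (g x)
  rw [sub_sub_cancel_left, inner_neg_right, norm_neg, inner_smul_right, norm_smul,
    Real.norm_of_nonneg (inv_nonneg.2 hL.le), real_inner_comm] at h
  -- completing the square: `-⟪g x, d⟫ / L + ‖d‖² / (2L) = (‖d - g x‖² - ‖g x‖²) / (2L)`
  rw [hsq]
  convert h using 1
  field_simp
  ring

theorem inexact_gradient_step_PL_le (hgrad : ∀ x, HasGradientAt f (g x) x)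
    (hLip : ∀ x y, ‖g x - g y‖ ≤ L * ‖x - y‖) (hL : 0 < L) {μ fstar : ℝ} (hμ : 0 < μ)
    (hPL : ∀ x, f x - fstar ≤ ‖g x‖ ^ 2 / (2 * μ)) (x d : E) :
    f (x - L⁻¹ • d) - fstar ≤ (1 - μ / L) * (f x - fstar) + ‖d - g x‖ ^ 2 / (2 * L) := by
  have hgap : μ / L * (f x - fstar) ≤ ‖g x‖ ^ 2 / (2 * L) :=
    calc μ / L * (f x - fstar) ≤ μ / L * (‖g x‖ ^ 2 / (2 * μ)) := by gcongr; exact hPL x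
      _ = ‖g x‖ ^ 2 / (2 * L) := by field_simp
  have hdesc := apply_sub_inv_smul_le_of_lipschitz_gradient hgrad hLip hL x d
  rw [sub_div] at hdesc
  linarith

end Descent

theorem le_pow_mul_add_div_one_sub {a : ℕ → ℝ} {r c : ℝ} (hr₀ : 0 ≤ r) (hr₁ : r < 1)
    (hc : 0 ≤ c) (ha : ∀ k, a (k + 1) ≤ r * a k + c) (k : ℕ) :
    a k ≤ r ^ k * a 0 + c / (1 - r) := by
  have h1r : 0 < 1 - r := sub_pos.2 hr₁
  induction k with
  | zero => simpa using div_nonneg hc h1r.le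
  | succ k ih =>
    calc a (k + 1) ≤ r * (r ^ k * a 0 + c / (1 - r)) + c := (ha k).trans (by gcongr)
      _ = r ^ (k + 1) * a 0 + c / (1 - r) := by field_simp; ring

theorem inexact_gradient_descent_PL_rate_general {n : ℕ} (f : EuclideanSpace ℝ (Fin n) → ℝ)
    (g gt : EuclideanSpace ℝ (Fin n) → EuclideanSpace ℝ (Fin n)) (L μ Δ fstar : ℝ)
    (hL : 0 < L) (hμ : 0 < μ) (hμL : μ ≤ L)
    (hgrad : ∀ x, HasGradientAt f (g x) x)
    (hLip : ∀ x y, ‖g x - g y‖ ≤ L * ‖x - y‖)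
    (herr : ∀ x, ‖gt x - g x‖ ≤ Δ)
    (hPL : ∀ x, f x - fstar ≤ ‖g x‖ ^ 2 / (2 * μ))
    (x : ℕ → EuclideanSpace ℝ (Fin n))
    (hstep : ∀ k, x (k + 1) = x k - (1 / L) • gt (x k)) :
    ∀ k, f (x (k + 1)) - fstar
      ≤ (1 - μ / L) ^ (k + 1) * (f (x 0) - fstar) + Δ ^ 2 / (2 * μ) := by
  have hcontract (k : ℕ) : f (x (k + 1)) - fstar
      ≤ (1 - μ / L) * (f (x k) - fstar) + Δ ^ 2 / (2 * L) := by
    have herr_sq : ‖gt (x k) - g (x k)‖ ^ 2 ≤ Δ ^ 2 :=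
      pow_le_pow_left₀ (norm_nonneg _) (herr _) 2
    rw [hstep k, one_div]
    refine (inexact_gradient_step_PL_le hgrad hLip hL hμ hPL (x k) (gt (x k))).trans ?_
    gcongr
  have hr₀ : 0 ≤ 1 - μ / L := sub_nonneg.2 ((div_le_one hL).2 hμL)
  have hr₁ : 1 - μ / L < 1 := sub_lt_self 1 (div_pos hμ hL)
  have hlimit : Δ ^ 2 / (2 * L) / (1 - (1 - μ / L)) = Δ ^ 2 / (2 * μ) := by
    rw [sub_sub_cancel]
    field_simp
  intro k
  simpa only [hlimit] using le_pow_mul_add_div_one_sub (a := fun k => f (x k) - fstar)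
    hr₀ hr₁ (by positivity) hcontract (k + 1)

/-- Gradient descent with inexact gradient (absolute error `Δ`) on an
`L`-smooth function with the `μ`-PL condition satisfies
`f(x^{k+1}) - f* ≤ (1 - μ/L)^{k+1}(f(x⁰) - f*) + Δ²/(2μ)`. -/
theorem inexact_gradient_descent_PL_rate {n : ℕ} (f : EuclideanSpace ℝ (Fin n) → ℝ)
    (g gt : EuclideanSpace ℝ (Fin n) → EuclideanSpace ℝ (Fin n)) (L μ Δ fstar : ℝ)
    (hL : 0 < L) (hμ : 0 < μ) (hμL : μ ≤ L) (hΔ : 0 ≤ Δ)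
    (hgrad : ∀ x, HasGradientAt f (g x) x)
    (hLip : ∀ x y, ‖g x - g y‖ ≤ L * ‖x - y‖)
    (herr : ∀ x, ‖gt x - g x‖ ≤ Δ)
    (hlb : ∀ x, fstar ≤ f x)
    (hPL : ∀ x, f x - fstar ≤ ‖g x‖ ^ 2 / (2 * μ))
    (x : ℕ → EuclideanSpace ℝ (Fin n))
    (hstep : ∀ k, x (k + 1) = x k - (1 / L) • gt (x k)) :
    ∀ k, f (x (k + 1)) - fstar
      ≤ (1 - μ / L) ^ (k + 1) * (f (x 0) - fstar) + Δ ^ 2 / (2 * μ) :=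
  inexact_gradient_descent_PL_rate_general f g gt L μ Δ fstar hL hμ hμL hgrad hLip herr hPL x hstep
end

section
/- For gradient descent with inexact gradient of absolute error Δ on an L-smooth function, after N steps min_{0≤k≤N-1} ‖∇f(x^k)‖ ≤ Δ + √(2L(f(x^0) - f*)/N). -/
/-!
The descent lemma turns each inexact step into
`‖∇f(xᵏ)‖² ≤ Δ² + 2L (f(xᵏ) - f(xᵏ⁺¹))`, because
`2⟪∇f, d⟫ - ‖d‖² = ‖∇f‖² - ‖d - ∇f‖²` for the inexact gradient `d`.
Summing over `k < N` telescopes the right-hand side to at most `NΔ² + 2L (f(x⁰) - f*)`,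
so the smallest term is at most `Δ² + 2L (f(x⁰) - f*)/N`, and `√(a + b) ≤ √a + √b`.
-/

open Finset

section Descent

variable {E : Type*} [NormedAddCommGroup E] [InnerProductSpace ℝ E]
  {f : E → ℝ} {g : E → E} {L : ℝ}

theorem hasDerivAt_comp_add_smul_of_hasGradientAt [CompleteSpace E]
    (hgrad : ∀ x, HasGradientAt f (g x) x) (x v : E) (t : ℝ) :
    HasDerivAt (fun s : ℝ => f (x + s • v)) (inner ℝ (g (x + t • v)) v) t := by
  have hline : HasDerivAt (fun s : ℝ => x + s • v) v t := by
    simpa using ((hasDerivAt_id t).smul_const v).const_add x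
  have h := (hgrad (x + t • v)).hasFDerivAt.comp_hasDerivAt t hline
  simp only [InnerProductSpace.toDual_apply_apply] at h
  exact h

theorem inner_sub_le_of_lipschitz (hLip : ∀ x y, ‖g x - g y‖ ≤ L * ‖x - y‖)
    (x v : E) {t : ℝ} (ht : 0 ≤ t) :
    inner ℝ (g (x + t • v) - g x) v ≤ L * t * ‖v‖ ^ 2 :=
  calc inner ℝ (g (x + t • v) - g x) v ≤ ‖g (x + t • v) - g x‖ * ‖v‖ :=
        real_inner_le_norm _ _
    _ ≤ L * ‖x + t • v - x‖ * ‖v‖ := by gcongr; exact hLip _ _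
    _ = L * t * ‖v‖ ^ 2 := by
      rw [add_sub_cancel_left, norm_smul, Real.norm_of_nonneg ht]; ring

theorem le_add_inner_add_sq_of_lipschitz_gradient [CompleteSpace E]
    (hgrad : ∀ x, HasGradientAt f (g x) x)
    (hLip : ∀ x y, ‖g x - g y‖ ≤ L * ‖x - y‖) (x y : E) :
    f y ≤ f x + inner ℝ (g x) (y - x) + L / 2 * ‖y - x‖ ^ 2 := by
  set v := y - x
  let φ : ℝ → ℝ := fun t =>
    f (x + t • v) - t * inner ℝ (g x) v - L / 2 * t ^ 2 * ‖v‖ ^ 2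
  have hφ : ∀ t, HasDerivAt φ
      (inner ℝ (g (x + t • v)) v - inner ℝ (g x) v - L * t * ‖v‖ ^ 2) t := by
    intro t
    have hquad := ((hasDerivAt_pow 2 t).const_mul (L / 2)).mul_const (‖v‖ ^ 2)
    refine (((hasDerivAt_comp_add_smul_of_hasGradientAt hgrad x v t).sub
      ((hasDerivAt_id t).mul_const _)).sub hquad).congr_deriv ?_
    ring
  have hanti : AntitoneOn φ (Set.Ici 0) := by
    refine antitoneOn_of_hasDerivWithinAt_nonpos (convex_Ici 0)
      (continuous_iff_continuousAt.2 fun t => (hφ t).continuousAt).continuousOn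
      (fun t _ => (hφ t).hasDerivWithinAt) fun t ht => ?_
    rw [interior_Ici] at ht
    have hinner := inner_sub_le_of_lipschitz hLip x v ht.le
    rw [inner_sub_left] at hinner
    linarith
  have h10 : φ 1 ≤ φ 0 := hanti (by norm_num) (by norm_num) zero_le_one
  simp only [φ, v, one_smul, zero_smul, add_zero, add_sub_cancel] at h10
  linarith

theorem sq_norm_le_of_inexact_gradient_step [CompleteSpace E] (hL : 0 < L)
    (hgrad : ∀ x, HasGradientAt f (g x) x) (hLip : ∀ x y, ‖g x - g y‖ ≤ L * ‖x - y‖)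
    {x d : E} {Δ : ℝ} (hd : ‖d - g x‖ ≤ Δ) :
    ‖g x‖ ^ 2 ≤ Δ ^ 2 + 2 * L * (f x - f (x - (1 / L) • d)) := by
  have hdesc := le_add_inner_add_sq_of_lipschitz_gradient hgrad hLip x (x - (1 / L) • d)
  rw [sub_sub_cancel_left, inner_neg_right, real_inner_smul_right, norm_neg, norm_smul,
    mul_pow, Real.norm_eq_abs, sq_abs] at hdesc
  have hpol : 2 * inner ℝ (g x) d - ‖d‖ ^ 2 = ‖g x‖ ^ 2 - ‖d - g x‖ ^ 2 := by
    rw [norm_sub_sq_real, real_inner_comm]; ring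
  have hsq : ‖d - g x‖ ^ 2 ≤ Δ ^ 2 := pow_le_pow_left₀ (norm_nonneg _) hd 2
  have hscaled : 2 * inner ℝ (g x) d - ‖d‖ ^ 2 ≤ 2 * L * (f x - f (x - (1 / L) • d)) := by
    have h2L := mul_le_mul_of_nonneg_left hdesc (by positivity : (0 : ℝ) ≤ 2 * L)
    field_simp at h2L ⊢
    linarith
  linarith

end Descent

theorem sum_range_le_of_le_add_mul_sub {a b : ℕ → ℝ} {c M : ℝ}
    (h : ∀ k, a k ≤ c + M * (b k - b (k + 1))) (N : ℕ) :
    ∑ k ∈ range N, a k ≤ N * c + M * (b 0 - b N) :=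
  calc ∑ k ∈ range N, a k ≤ ∑ k ∈ range N, (c + M * (b k - b (k + 1))) :=
        sum_le_sum fun k _ => h k
    _ = N * c + M * (b 0 - b N) := by
      rw [sum_add_distrib, ← mul_sum, sum_range_sub', sum_const, card_range, nsmul_eq_mul]

theorem le_add_sqrt_of_sq_le_sq_add {a b c : ℝ} (hb : 0 ≤ b) (hc : 0 ≤ c)
    (h : a ^ 2 ≤ b ^ 2 + c) : a ≤ b + √c := by
  have hsq : a ^ 2 ≤ (b + √c) ^ 2 := by
    nlinarith [Real.sq_sqrt hc, mul_nonneg hb (Real.sqrt_nonneg c)]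
  exact (abs_le_of_sq_le_sq' hsq (by positivity)).2

theorem inexact_gradient_descent_min_grad_norm_general {n : ℕ} (f : EuclideanSpace ℝ (Fin n) → ℝ)
    (g gt : EuclideanSpace ℝ (Fin n) → EuclideanSpace ℝ (Fin n)) (L Δ fstar : ℝ)
    (hL : 0 < L)
    (hgrad : ∀ x, HasGradientAt f (g x) x)
    (hLip : ∀ x y, ‖g x - g y‖ ≤ L * ‖x - y‖)
    (herr : ∀ x, ‖gt x - g x‖ ≤ Δ)
    (hlb : ∀ x, fstar ≤ f x)
    (x : ℕ → EuclideanSpace ℝ (Fin n))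
    (hstep : ∀ k, x (k + 1) = x k - (1 / L) • gt (x k)) :
    ∀ N : ℕ, 0 < N → ∃ k < N,
      ‖g (x k)‖ ≤ Δ + Real.sqrt (2 * L * (f (x 0) - fstar) / N) := by
  intro N hN
  have hΔ : 0 ≤ Δ := (norm_nonneg _).trans (herr 0)
  have hNpos : (0 : ℝ) < N := Nat.cast_pos.2 hN
  set c := 2 * L * (f (x 0) - fstar) / N
  have hc : 0 ≤ c := div_nonneg (mul_nonneg (by positivity) (sub_nonneg.2 (hlb _))) hNpos.le
  have hsum : ∑ k ∈ range N, ‖g (x k)‖ ^ 2 ≤ ∑ _k ∈ range N, (Δ ^ 2 + c) :=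
    calc ∑ k ∈ range N, ‖g (x k)‖ ^ 2 ≤ N * Δ ^ 2 + 2 * L * (f (x 0) - f (x N)) :=
          sum_range_le_of_le_add_mul_sub (fun k => hstep k ▸
            sq_norm_le_of_inexact_gradient_step hL hgrad hLip (herr (x k))) N
      _ ≤ N * Δ ^ 2 + 2 * L * (f (x 0) - fstar) := by gcongr; exact hlb _
      _ = ∑ _k ∈ range N, (Δ ^ 2 + c) := by
        rw [sum_const, card_range, nsmul_eq_mul, mul_add, mul_div_cancel₀ _ hNpos.ne']
  obtain ⟨k, hk, hk_le⟩ := exists_le_of_sum_le (nonempty_range_iff.2 hN.ne') hsum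
  exact ⟨k, mem_range.1 hk, le_add_sqrt_of_sq_le_sq_add hΔ hc hk_le⟩

/-- For gradient descent with inexact gradient of absolute error `Δ` on an
`L`-smooth function bounded below by `f*`, after `N` steps
`min_{0 ≤ k ≤ N-1} ‖∇f(x^k)‖ ≤ Δ + √(2L(f(x⁰) - f*)/N)`. -/
theorem inexact_gradient_descent_min_grad_norm {n : ℕ} (f : EuclideanSpace ℝ (Fin n) → ℝ)
    (g gt : EuclideanSpace ℝ (Fin n) → EuclideanSpace ℝ (Fin n)) (L Δ fstar : ℝ)
    (hL : 0 < L) (hΔ : 0 ≤ Δ)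
    (hgrad : ∀ x, HasGradientAt f (g x) x)
    (hLip : ∀ x y, ‖g x - g y‖ ≤ L * ‖x - y‖)
    (herr : ∀ x, ‖gt x - g x‖ ≤ Δ)
    (hlb : ∀ x, fstar ≤ f x)
    (x : ℕ → EuclideanSpace ℝ (Fin n))
    (hstep : ∀ k, x (k + 1) = x k - (1 / L) • gt (x k)) :
    ∀ N : ℕ, 0 < N → ∃ k < N,
      ‖g (x k)‖ ≤ Δ + Real.sqrt (2 * L * (f (x 0) - fstar) / N) :=
  inexact_gradient_descent_min_grad_norm_general f g gt L Δ fstar hL hgrad hLip herr hlb x hstep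
end

section
/- If δ_k ≥ 0 satisfies δ_{k+1} ≤ (1 - 2/(k+1))δ_k + 2/(k+1)² for all k ≥ 1, then δ_N ≤ 2/(N+2) for all N ≥ 2. -/
/-!
The bound `2 / (k + 2)` is a supersolution of the recursion for `k ≥ 1`, and the coefficient
`1 - 2 / (k + 1)` is nonnegative there, so the bound propagates by induction. It starts at
`N = 2` because that coefficient vanishes at `k = 1`, giving `δ 2 ≤ 1 / 2` outright.
-/

theorem le_of_le_mul_add_of_supersolution {u f a b : ℕ → ℝ} {m : ℕ} (hm : u m ≤ f m)
    (hrec : ∀ k ≥ m, u (k + 1) ≤ a k * u k + b k) (ha : ∀ k ≥ m, 0 ≤ a k)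
    (hf : ∀ k ≥ m, a k * f k + b k ≤ f (k + 1)) : ∀ n ≥ m, u n ≤ f n := by
  intro n hn
  induction n, hn using Nat.le_induction with
  | base => exact hm
  | succ k hk ih =>
    calc u (k + 1) ≤ a k * u k + b k := hrec k hk
      _ ≤ a k * f k + b k := by gcongr; exact ha k hk
      _ ≤ f (k + 1) := hf k hk

theorem one_sub_two_div_add_one_nonneg {x : ℝ} (hx : 1 ≤ x) : 0 ≤ 1 - 2 / (x + 1) := by
  rw [sub_nonneg, div_le_one (by linarith)]
  linarith

theorem frankWolfe_bound_supersolution {x : ℝ} (hx : 1 ≤ x) :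
    (1 - 2 / (x + 1)) * (2 / (x + 2)) + 2 / (x + 1) ^ 2 ≤ 2 / (x + 1 + 2) := by
  have h1 : x + 1 ≠ 0 := by linarith
  have h2 : x + 2 ≠ 0 := by linarith
  have h3 : x + 1 + 2 ≠ 0 := by linarith
  have gap : 2 / (x + 1 + 2) - ((1 - 2 / (x + 1)) * (2 / (x + 2)) + 2 / (x + 1) ^ 2)
      = 2 * (x - 1) / ((x + 1) ^ 2 * (x + 2) * (x + 1 + 2)) := by
    field_simp
    ring
  have hx₂ : 0 < x + 2 := by linarith
  have gap_nonneg : 0 ≤ 2 * (x - 1) / ((x + 1) ^ 2 * (x + 2) * (x + 1 + 2)) :=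
    div_nonneg (by linarith) (by positivity)
  linarith

theorem frank_wolfe_recursion_general (δ : ℕ → ℝ)
    (hrec : ∀ k : ℕ, 1 ≤ k →
      δ (k + 1) ≤ (1 - 2 / ((k : ℝ) + 1)) * δ k + 2 / ((k : ℝ) + 1) ^ 2) :
    ∀ N : ℕ, 2 ≤ N → δ N ≤ 2 / ((N : ℝ) + 2) := by
  have hδ₂ : δ 2 ≤ 2 / ((2 : ℕ) + 2) := by
    have := hrec 1 le_rfl
    norm_num at this ⊢
    exact this
  refine le_of_le_mul_add_of_supersolution hδ₂ (fun k hk => hrec k (by omega))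
    (fun k hk => one_sub_two_div_add_one_nonneg (by exact_mod_cast (by omega : 1 ≤ k)))
    (fun k hk => ?_)
  push_cast
  exact frankWolfe_bound_supersolution (by exact_mod_cast (by omega : 1 ≤ k))

/-- The key Frank–Wolfe recursion: if `δ_k ≥ 0` and
`δ_{k+1} ≤ (1 - 2/(k+1))δ_k + 2/(k+1)²` for all `k ≥ 1`, then
`δ_N ≤ 2/(N+2)` for all `N ≥ 2`. -/
theorem frank_wolfe_recursion (δ : ℕ → ℝ)
    (hpos : ∀ k, 1 ≤ k → 0 ≤ δ k)
    (hrec : ∀ k : ℕ, 1 ≤ k →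
      δ (k + 1) ≤ (1 - 2 / ((k : ℝ) + 1)) * δ k + 2 / ((k : ℝ) + 1) ^ 2) :
    ∀ N : ℕ, 2 ≤ N → δ N ≤ 2 / ((N : ℝ) + 2) :=
  frank_wolfe_recursion_general δ hrec
end

section
/- A μ-weakly convex function f with α-sharp minimum has no stationary points x with 0 < dist(x, X*) < 2α/μ. -/
/-!
At a stationary point `x`, weak convexity says `f x ≤ f y + μ/2 ‖y - x‖²` for every `y`;
taking `y ∈ X*` and the infimum over `X*` gives `f x - f* ≤ μ/2 d²` with `d = dist(x, X*)`.
Sharpness gives `α d ≤ f x - f*`, so `d > 0` forces `d ≥ 2α/μ`.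
-/

open Metric

theorem Metric.le_mul_infDist_sq {X : Type*} [PseudoMetricSpace X] {s : Set X} {x : X} {a b : ℝ}
    (hs : s.Nonempty) (hb : 0 < b) (h : ∀ y ∈ s, a ≤ b * dist x y ^ 2) :
    a ≤ b * infDist x s ^ 2 := by
  have hsqrt : √(a / b) ≤ infDist x s := (le_infDist hs).2 fun y hy =>
    (Real.sqrt_le_left dist_nonneg).2 <| (div_le_iff₀' hb).2 (h y hy)
  exact (div_le_iff₀' hb).1 <| (Real.sqrt_le_left infDist_nonneg).1 hsqrt

section WeakSubgradient

variable {E : Type*} [NormedAddCommGroup E] [InnerProductSpace ℝ E]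

def IsWeakSubgradient (f : E → ℝ) (μ : ℝ) (x g : E) : Prop :=
  ∀ y, f x + inner ℝ g (y - x) - μ / 2 * ‖y - x‖ ^ 2 ≤ f y

theorem IsWeakSubgradient.le_add_mul_dist_sq {f : E → ℝ} {μ : ℝ} {x : E}
    (h : IsWeakSubgradient f μ x 0) (y : E) : f x ≤ f y + μ / 2 * dist x y ^ 2 := by
  have := h y
  rw [inner_zero_left, ← dist_eq_norm, dist_comm] at this
  linarith

theorem IsWeakSubgradient.div_le_infDist_of_sharp {f : E → ℝ} {μ α fstar : ℝ} {x : E}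
    {s : Set E} (h : IsWeakSubgradient f μ x 0) (hμ : 0 < μ) (hfstar : ∀ y ∈ s, f y = fstar)
    (hsharp : α * infDist x s ≤ f x - fstar) (hpos : 0 < infDist x s) :
    2 * α / μ ≤ infDist x s := by
  have hs : s.Nonempty := Set.nonempty_iff_ne_empty.2 fun hs => by simp [hs] at hpos
  have hgrowth : f x - fstar ≤ μ / 2 * infDist x s ^ 2 :=
    le_mul_infDist_sq hs (half_pos hμ) fun y hy => by
      linarith [h.le_add_mul_dist_sq y, hfstar y hy]
  rw [div_le_iff₀ hμ]
  nlinarith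

end WeakSubgradient

theorem weakly_convex_sharp_no_stationary_points_general {n : ℕ}
    (f : EuclideanSpace ℝ (Fin n) → ℝ) (μ α fstar : ℝ) (hμ : 0 < μ)
    (Xstar : Set (EuclideanSpace ℝ (Fin n)))
    (hfstar : ∀ y ∈ Xstar, f y = fstar)
    (subdiff : EuclideanSpace ℝ (Fin n) → Set (EuclideanSpace ℝ (Fin n)))
    (hsub : ∀ x gx, gx ∈ subdiff x →
      ∀ y, f y ≥ f x + (inner ℝ gx (y - x) : ℝ) - μ / 2 * ‖y - x‖ ^ 2)
    (hsharp : ∀ x, f x - fstar ≥ α * Metric.infDist x Xstar) :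
    ∀ x, 0 ∈ subdiff x →
      ¬ (0 < Metric.infDist x Xstar ∧ Metric.infDist x Xstar < 2 * α / μ) := by
  intro x hx ⟨hpos, hlt⟩
  exact (IsWeakSubgradient.div_le_infDist_of_sharp (hsub x 0 hx) hμ hfstar (hsharp x) hpos).not_gt
    hlt

/-- A `μ`-weakly convex function with an `α`-sharp minimum has no stationary
points `x` (points with `0 ∈ ∂f(x)`) satisfying `0 < dist(x, X*) < 2α/μ`. -/
theorem weakly_convex_sharp_no_stationary_points {n : ℕ}
    (f : EuclideanSpace ℝ (Fin n) → ℝ) (μ α fstar : ℝ) (hμ : 0 < μ) (hα : 0 < α)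
    (Xstar : Set (EuclideanSpace ℝ (Fin n)))
    (hXstar : Xstar = {y | ∀ z, f y ≤ f z}) (hne : Xstar.Nonempty)
    (hfstar : ∀ y ∈ Xstar, f y = fstar)
    (subdiff : EuclideanSpace ℝ (Fin n) → Set (EuclideanSpace ℝ (Fin n)))
    (hsub : ∀ x gx, gx ∈ subdiff x →
      ∀ y, f y ≥ f x + (inner ℝ gx (y - x) : ℝ) - μ / 2 * ‖y - x‖ ^ 2)
    (hsharp : ∀ x, f x - fstar ≥ α * Metric.infDist x Xstar) :
    ∀ x, 0 ∈ subdiff x →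
      ¬ (0 < Metric.infDist x Xstar ∧ Metric.infDist x Xstar < 2 * α / μ) :=
  weakly_convex_sharp_no_stationary_points_general f μ α fstar hμ Xstar hfstar subdiff hsub hsharp
end
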